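/- Let T be a Tarski monster group and T(1/2) the associated Bruck loop with x ⊙ y = (y x² y)^{1/2}. Then the left nucleus N_l(T(1/2)) = {a : a ⊙ (x ⊙ y) = (a ⊙ x) ⊙ y for all x,y} is trivial. -/
import Mathlib


/-- A Tarski monster: an infinite group in which every nontrivial proper
subgroup is cyclic of order the fixed prime `p`. -/
def IsTarskiMonster (G : Type*) [Group G] (p : ℕ) : Prop :=
  p.Prime ∧ Infinite G ∧
    ∀ H : Subgroup G, H ≠ ⊥ → H ≠ ⊤ → Nat.card H = p ∧ IsCyclic H

open Subgroup

/-- Every nontrivial element of a Tarski monster has order `p`. -/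
private lemma tm_orderOf {G : Type*} [Group G] {p : ℕ} (h : IsTarskiMonster G p)
    {g : G} (hg : g ≠ 1) : orderOf g = p := by
  obtain ⟨hp, hinf, hsub⟩ := h
  have hbot : zpowers g ≠ ⊥ := by simpa [Subgroup.zpowers_eq_bot] using hg
  have htop : zpowers g ≠ ⊤ := by
    intro htop
    by_cases hfin : orderOf g = 0
    · -- infinite order
      have hz : ∀ m : ℤ, g ^ m = 1 → m = 0 := by
        intro m hm
        have h1 : g ^ m.natAbs = 1 := by
          rcases Int.natAbs_eq m with he | he
          · rw [← zpow_natCast, ← he, hm]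
          · have hcast : ((m.natAbs : ℤ)) = -m := by omega
            rw [← zpow_natCast, hcast, zpow_neg, hm, inv_one]
        have h2 := orderOf_dvd_of_pow_eq_one h1
        rw [hfin] at h2
        have := Nat.eq_zero_of_zero_dvd h2
        omega
      have hgg : g * g ≠ 1 := by
        intro e
        have : g ^ (2 : ℤ) = 1 := by rw [zpow_two]; exact e
        have := hz 2 this; omega
      have hbot2 : zpowers (g * g) ≠ ⊥ := by
        simpa [Subgroup.zpowers_eq_bot] using hgg
      have htop2 : zpowers (g * g) ≠ ⊤ := by
        intro e
        have hgmem : g ∈ zpowers (g * g) := by rw [e]; exact Subgroup.mem_top g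
        obtain ⟨k, hk⟩ := Subgroup.mem_zpowers_iff.mp hgmem
        have hgg2 : g * g = g ^ (2 : ℤ) := by rw [zpow_two]
        have : g ^ (2 * k - 1) = 1 := by
          have : g ^ (2 * k) = g := by
            rw [zpow_mul, ← hgg2]; exact hk
          rw [sub_eq_add_neg, zpow_add, this, zpow_neg, zpow_one, mul_inv_cancel]
        have := hz _ this; omega
      have hcard := (hsub _ hbot2 htop2).1
      rw [Nat.card_zpowers] at hcard
      have hpow : (g * g) ^ p = 1 := by
        rw [← hcard]; exact pow_orderOf_eq_one _
      have h2p : g ^ (2 * p) = 1 := by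
        rw [pow_mul, pow_two]; exact hpow
      have hdvd := orderOf_dvd_of_pow_eq_one h2p
      rw [hfin] at hdvd
      have := Nat.eq_zero_of_zero_dvd hdvd
      have : p = 0 := by omega
      exact hp.ne_zero this
    · -- finite order and `zpowers g = ⊤` would make `G` finite
      have hfin1 : Finite ↥(zpowers g) :=
        Nat.finite_of_card_ne_zero (by rw [Nat.card_zpowers]; exact hfin)
      rw [htop] at hfin1
      have hfG : Finite G := Finite.of_equiv _ Subgroup.topEquiv.toEquiv
      haveI := hinf
      haveI := hfG
      exact not_finite G
  have := (hsub _ hbot htop).1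
  rwa [Nat.card_zpowers] at this

/-- In a Tarski monster, commuting nontrivial elements generate the same
cyclic subgroup of order `p`. -/
private lemma tm_mem {G : Type*} [Group G] {p : ℕ} (h : IsTarskiMonster G p)
    {u w : G} (hu : u ≠ 1) (hw : w ≠ 1) (hc : u * w = w * u) : w ∈ zpowers u := by
  have hp := h.1
  have hinf := h.2.1
  have hou : orderOf u = p := tm_orderOf h hu
  have how : orderOf w = p := tm_orderOf h hw
  have hC : Commute u w := hc
  haveI : Finite ↥(zpowers u) :=
    Nat.finite_of_card_ne_zero (by rw [Nat.card_zpowers, hou]; exact hp.pos.ne')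
  haveI : Finite ↥(zpowers w) :=
    Nat.finite_of_card_ne_zero (by rw [Nat.card_zpowers, how]; exact hp.pos.ne')
  have hfu : (↑(zpowers u) : Set G).Finite := Set.toFinite _
  have hfw : (↑(zpowers w) : Set G).Finite := Set.toFinite _
  set H := zpowers u ⊔ zpowers w with hH
  -- the subgroup generated by u and w, described explicitly
  let K : Subgroup G :=
    { carrier := {x | ∃ m n : ℤ, u ^ m * w ^ n = x}
      one_mem' := ⟨0, 0, by simp⟩
      mul_mem' := by
        rintro x y ⟨m, n, rfl⟩ ⟨m', n', rfl⟩
        refine ⟨m + m', n + n', ?_⟩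
        rw [zpow_add, zpow_add]
        exact ((hC.zpow_zpow m' n).symm.mul_mul_mul_comm (u ^ m) (w ^ n')).symm
      inv_mem' := by
        rintro x ⟨m, n, rfl⟩
        refine ⟨-m, -n, ?_⟩
        rw [zpow_neg, zpow_neg, ← mul_inv_rev, (hC.zpow_zpow m n).eq] }
  have hHK : H ≤ K := by
    refine sup_le ?_ ?_
    · intro x hx
      obtain ⟨m, hm⟩ := Subgroup.mem_zpowers_iff.mp hx
      exact ⟨m, 0, by simp [hm]⟩
    · intro x hx
      obtain ⟨n, hn⟩ := Subgroup.mem_zpowers_iff.mp hx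
      exact ⟨0, n, by simp [hn]⟩
  have hHtop : H ≠ ⊤ := by
    intro e
    have hsubK : {x : G | ∃ m n : ℤ, u ^ m * w ^ n = x} ⊆
        Set.image2 (· * ·) ↑(zpowers u) ↑(zpowers w) := by
      rintro x ⟨m, n, rfl⟩
      exact Set.mem_image2_of_mem ⟨m, rfl⟩ ⟨n, rfl⟩
    have hKfin : {x : G | ∃ m n : ℤ, u ^ m * w ^ n = x}.Finite :=
      (Set.Finite.image2 _ hfu hfw).subset hsubK
    have huniv : (Set.univ : Set G) ⊆ {x : G | ∃ m n : ℤ, u ^ m * w ^ n = x} := by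
      intro x _
      exact hHK (e ▸ Subgroup.mem_top x)
    exact Set.infinite_univ (hKfin.subset huniv)
  have hHbot : H ≠ ⊥ := by
    intro e
    apply hu
    have : u ∈ H := Subgroup.mem_sup_left (Subgroup.mem_zpowers u)
    rw [e] at this
    exact Subgroup.mem_bot.mp this
  have hcard : Nat.card H = p := (h.2.2 H hHbot hHtop).1
  haveI hfH : Finite ↥H := Nat.finite_of_card_ne_zero (by rw [hcard]; exact hp.pos.ne')
  have heq : zpowers u = H := by
    apply SetLike.ext'
    apply Set.eq_of_subset_of_ncard_le
    · exact SetLike.coe_subset_coe.mpr le_sup_left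
    · rw [← Nat.card_coe_set_eq, ← Nat.card_coe_set_eq]
      have h1 : Nat.card ↥(↑H : Set G) = p := hcard
      have h2 : Nat.card ↥(↑(zpowers u) : Set G) = p := by
        rw [show Nat.card ↥(↑(zpowers u) : Set G) = Nat.card ↥(zpowers u) from rfl,
          Nat.card_zpowers, hou]
      rw [h1, h2]
    · exact Set.toFinite _
  rw [heq]
  exact Subgroup.mem_sup_right (Subgroup.mem_zpowers w)

/-- A Tarski monster is nonabelian. -/
private lemma tm_nonab {G : Type*} [Group G] {p : ℕ} (h : IsTarskiMonster G p) :
    ∃ c v : G, v * c * v⁻¹ ≠ c := by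
  by_contra hcon
  push_neg at hcon
  haveI hinf := h.2.1
  haveI : Nontrivial G := inferInstance
  obtain ⟨g, hg⟩ := exists_ne (1 : G)
  have hog : orderOf g = p := tm_orderOf h hg
  haveI : Finite ↥(zpowers g) :=
    Nat.finite_of_card_ne_zero (by rw [Nat.card_zpowers, hog]; exact h.1.pos.ne')
  have hfin : (↑(zpowers g) : Set G).Finite := Set.toFinite _
  have : ∃ y : G, y ∉ zpowers g := by
    by_contra hy
    push_neg at hy
    exact Set.infinite_univ (hfin.subset fun x _ => hy x)
  obtain ⟨y, hy⟩ := this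
  have hy1 : y ≠ 1 := fun e => hy (e ▸ (zpowers g).one_mem)
  have hcomm : g * y = y * g := by
    have := hcon g y
    calc g * y = (y * g * y⁻¹) * y := by rw [this]
    _ = y * g := by group
  exact hy (tm_mem h hg hy1 hcomm)

/-- In the Bruck loop `T(1/2)` associated with a Tarski monster, the left
nucleus is trivial. -/
theorem tarskiMonster_halving_leftNucleus_trivial {G : Type*} [Group G] {p : ℕ}
    (h : IsTarskiMonster G p)
    (s : G → G) (hs_sq : ∀ x : G, s x * s x = x)
    (hs_uniq : ∀ x y : G, y * y = x → y = s x)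
    (o : G → G → G) (ho : ∀ x y : G, o x y = s (y * (x * x) * y)) :
    {a : G | ∀ x y : G, o (o a x) y = o a (o x y)} = {1} := by
  have hp := h.1
  haveI hinf := h.2.1
  have hsu : ∀ u : G, s (u * u) = u := fun u => (hs_uniq (u * u) u rfl).symm
  have ho1 : ∀ u : G, o 1 u = u := by
    intro u
    rw [ho]
    have : u * (1 * 1) * u = u * u := by group
    rw [this, hsu]
  ext a
  simp only [Set.mem_setOf_eq, Set.mem_singleton_iff]
  constructor
  · intro ha
    by_contra hne
    -- p is odd
    have hp2 : p ≠ 2 := by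
      intro hp2
      have hsq1 : ∀ g : G, g * g = 1 := by
        intro g
        by_cases hg : g = 1
        · rw [hg, one_mul]
        · have := tm_orderOf h hg
          rw [hp2] at this
          have : g ^ 2 = 1 := by rw [← this]; exact pow_orderOf_eq_one g
          rwa [pow_two] at this
      obtain ⟨c, v, hcv⟩ := tm_nonab h
      apply hcv
      have h1 : (v * c) * (v * c) = 1 := hsq1 _
      have h2 : v * c = c⁻¹ * v⁻¹ := by
        rw [← mul_inv_rev]
        exact eq_inv_of_mul_eq_one_left h1
      have hcinv : c⁻¹ = c := by
        have := hsq1 c; exact (inv_eq_of_mul_eq_one_right this).symm ▸ rfl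
      have hvinv : v⁻¹ = v := by
        have := hsq1 v
        exact inv_eq_of_mul_eq_one_right this
      calc v * c * v⁻¹ = c⁻¹ * v⁻¹ * v⁻¹ := by rw [h2]
      _ = c⁻¹ * (v⁻¹ * v⁻¹) := by rw [mul_assoc]
      _ = c⁻¹ := by rw [hvinv, hsq1 v, mul_one]
      _ = c := by rw [hcinv]
    set b := a * a with hbdef
    have hb : b ≠ 1 := by
      intro e
      have h2 : a ^ 2 = 1 := by rw [pow_two]; exact e
      have hdvd := orderOf_dvd_of_pow_eq_one h2
      rw [tm_orderOf h hne] at hdvd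
      exact hp2 ((Nat.prime_dvd_prime_iff_eq hp Nat.prime_two).mp hdvd)
    obtain ⟨c, v₀, hcv₀⟩ := tm_nonab h
    have hc1 : c ≠ 1 := by
      intro e; apply hcv₀; rw [e]; group
    -- key claim: every conjugate of c has the form b^k * c * b^k
    have hclaim : ∀ v : G, ∃ k : ℤ, v * c * v⁻¹ = b ^ k * c * b ^ k := by
      intro v
      by_cases hd : v * c * v⁻¹ = c
      · exact ⟨0, by rw [hd]; group⟩
      · set Z := o (v * c) v⁻¹ with hZdef
        have e := ha (v * c) v⁻¹
        rw [show o a (v * c) = s ((v * c) * (a * a) * (v * c)) from ho a (v * c)] at e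
        rw [ho (s ((v * c) * (a * a) * (v * c))) v⁻¹, ho a Z, hs_sq] at e
        -- e : s (v⁻¹ * ((v*c)*(a*a)*(v*c)) * v⁻¹) = s (Z * (a*a) * Z)
        have key : v⁻¹ * ((v * c) * (a * a) * (v * c)) * v⁻¹ = Z * (a * a) * Z := by
          calc v⁻¹ * ((v * c) * (a * a) * (v * c)) * v⁻¹
              = s (v⁻¹ * ((v * c) * (a * a) * (v * c)) * v⁻¹) *
                s (v⁻¹ * ((v * c) * (a * a) * (v * c)) * v⁻¹) := (hs_sq _).symm
          _ = s (Z * (a * a) * Z) * s (Z * (a * a) * Z) := by rw [e]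
          _ = Z * (a * a) * Z := hs_sq _
        have hZ2 : Z * Z = v⁻¹ * ((v * c) * (v * c)) * v⁻¹ := by
          rw [hZdef, ho]; exact hs_sq _
        have key2 : c * b * (v * c * v⁻¹) = Z * b * Z := by
          rw [hbdef, ← key]; group
        have hZ2' : Z * Z = c * (v * c * v⁻¹) := by
          rw [hZ2]; group
        set t := c⁻¹ * Z with htdef
        have ht : t ≠ 1 := by
          intro e1
          apply hd
          have hZc : Z = c := by
            have : c * t = c * 1 := by rw [e1]
            rwa [htdef, mul_inv_cancel_left, mul_one] at this
          have : c * c = c * (v * c * v⁻¹) := by rw [← hZ2', hZc]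
          exact (mul_left_cancel this).symm
        have hcomm : b * t = t * b := by
          have h2 : t * b * Z = b * t * Z := by
            calc t * b * Z = c⁻¹ * (Z * b * Z) := by rw [htdef]; group
            _ = c⁻¹ * (c * b * (v * c * v⁻¹)) := by rw [key2]
            _ = b * (v * c * v⁻¹) := by group
            _ = b * (c⁻¹ * (Z * Z)) := by rw [hZ2']; group
            _ = b * t * Z := by rw [htdef]; group
          exact (mul_right_cancel h2).symm
        have htb : t ∈ zpowers b := tm_mem h hb ht hcomm
        obtain ⟨k, hk⟩ := Subgroup.mem_zpowers_iff.mp htb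
        refine ⟨k, ?_⟩
        have hZbk : Z = c * b ^ k := by
          rw [hk, htdef]; group
        have : c * (v * c * v⁻¹) = c * (b ^ k * c * b ^ k) := by
          rw [← hZ2', hZbk]; group
        exact mul_left_cancel this
    -- derive finiteness of G, a contradiction
    set C := Subgroup.centralizer {c} with hCdef
    have hcC : c ∈ C := Subgroup.mem_centralizer_singleton_iff.mpr rfl
    have hCbot : C ≠ ⊥ := by
      intro e; apply hc1; rw [e] at hcC; exact Subgroup.mem_bot.mp hcC
    have hCtop : C ≠ ⊤ := by
      intro e
      apply hcv₀
      have : v₀ ∈ C := by rw [e]; exact Subgroup.mem_top v₀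
      have hcomm := Subgroup.mem_centralizer_singleton_iff.mp this
      rw [show v₀ * c = c * v₀ from hcomm,
        mul_inv_cancel_right]
    have hcardC : Nat.card C = p := (h.2.2 C hCbot hCtop).1
    haveI : Finite ↥C := Nat.finite_of_card_ne_zero (by rw [hcardC]; exact hp.pos.ne')
    have hCfin : (↑C : Set G).Finite := Set.toFinite _
    haveI : Finite ↥(zpowers b) :=
      Nat.finite_of_card_ne_zero
        (by rw [Nat.card_zpowers, tm_orderOf h hb]; exact hp.pos.ne')
    have hbfin : (↑(zpowers b) : Set G).Finite := Set.toFinite _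
    set T := (fun w => w * c * w) '' (↑(zpowers b) : Set G) with hTdef
    have hTfin : T.Finite := hbfin.image _
    have hcover : (Set.univ : Set G) ⊆ ⋃ x ∈ T, {v : G | v * c * v⁻¹ = x} := by
      intro v _
      obtain ⟨k, hk⟩ := hclaim v
      exact Set.mem_biUnion ⟨b ^ k, ⟨k, rfl⟩, rfl⟩ hk
    have hfib : ∀ x ∈ T, {v : G | v * c * v⁻¹ = x}.Finite := by
      intro x _
      rcases Set.eq_empty_or_nonempty {v : G | v * c * v⁻¹ = x} with he | ⟨v₁, hv₁⟩
      · rw [he]; exact Set.finite_empty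
      · have hsubset : {v : G | v * c * v⁻¹ = x} ⊆ (fun u => v₁ * u) '' (↑C : Set G) := by
          intro v hv
          simp only [Set.mem_setOf_eq] at hv hv₁
          have hmem : v₁⁻¹ * v ∈ C := by
            apply Subgroup.mem_centralizer_singleton_iff.mpr
            have h1 : v * c * v⁻¹ = v₁ * c * v₁⁻¹ := by rw [hv, hv₁]
            have h2 : (v₁⁻¹ * v) * c = c * (v₁⁻¹ * v) := by
              have : v₁⁻¹ * (v * c * v⁻¹) * v = v₁⁻¹ * (v₁ * c * v₁⁻¹) * v := by rw [h1]
              calc (v₁⁻¹ * v) * c = v₁⁻¹ * (v * c * v⁻¹) * v := by group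
              _ = v₁⁻¹ * (v₁ * c * v₁⁻¹) * v := this
              _ = c * (v₁⁻¹ * v) := by group
            exact h2
          exact ⟨v₁⁻¹ * v, hmem, by group⟩
        exact (hCfin.image _).subset hsubset
    have : (Set.univ : Set G).Finite :=
      ((hTfin.biUnion hfib).subset hcover)
    exact Set.infinite_univ this
  · rintro rfl
    intro x y
    rw [ho1, ho1]
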